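/- Let θ ≥ 2 be an integer and β > 0. Every x ∈ Δ_θ that maximizes φ_β over Δ_θ satisfies: (i) x_i > 0 for all 1 ≤ i ≤ θ; (ii) there exists a ∈ ℝ such that β·x_i = (1 − a) + log x_i for every 1 ≤ i ≤ θ; and consequently (iii) the coordinates x_1, …, x_θ take at most two distinct values. -/

import Mathlib

/-- The set `Δ_θ` of decreasing probability vectors in `ℝ^θ`. -/
def simplexOrd (θ : ℕ) : Set (Fin θ → ℝ) :=
  {x | (∀ i j : Fin θ, i ≤ j → x j ≤ x i) ∧ (∀ i, 0 ≤ x i) ∧ ∑ i, x i = 1}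

/-- The function `φ_β` (with `0·log 0 = 0`, automatic since `Real.log 0 = 0`). -/
noncomputable def phiFE (θ : ℕ) (β : ℝ) (x : Fin θ → ℝ) : ℝ :=
  β / 2 * ((∑ i, (x i) ^ 2) - 1) - ∑ i, x i * Real.log (x i)

/-!
By symmetry, a maximizer of `φ_β` over `Δ_θ` maximizes the separable function
`∑ᵢ f(xᵢ)`, `f t = β t² / 2 - t log t`, over the whole standard simplex, and everything follows
by moving mass between two coordinates. Since `-t log t` has infinite slope at `0`, moving a
little mass onto a zero coordinate would increase `φ_β`, so all coordinates are positive. At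
positive coordinates, first-order optimality makes `f'(xᵢ) = β xᵢ - log xᵢ - 1` independent of
`i`, and the strictly convex function `t ↦ β t - log t` takes each value at most twice.
-/

open Finset Function Real

theorem StrictConvexOn.card_le_two_of_forall_eq {𝕜 β : Type*} [Field 𝕜] [LinearOrder 𝕜]
    [IsStrictOrderedRing 𝕜] [AddCommMonoid β] [LinearOrder β] [IsOrderedAddMonoid β]
    [Module 𝕜 β] [PosSMulStrictMono 𝕜 β] {s : Set 𝕜} {f : 𝕜 → β} (hf : StrictConvexOn 𝕜 s f)
    {S : Finset 𝕜} (hS : ↑S ⊆ s) {c : β} (hc : ∀ t ∈ S, f t = c) : #S ≤ 2 := by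
  classical
  by_contra! hcard
  have hne : S.Nonempty := card_pos.1 (by omega)
  obtain ⟨t, ht⟩ : ((S.erase (S.min' hne)).erase (S.max' hne)).Nonempty := by
    rw [← card_pos]
    have h₁ := pred_card_le_card_erase (s := S) (a := S.min' hne)
    have h₂ := pred_card_le_card_erase (s := S.erase (S.min' hne)) (a := S.max' hne)
    omega
  have htS := mem_of_mem_erase (mem_of_mem_erase ht)
  have hmin_lt : S.min' hne < t := min'_lt_of_mem_erase_min' _ _ (mem_of_mem_erase ht)
  have hlt_max : t < S.max' hne :=
    lt_max'_of_mem_erase_max' _ _ (mem_erase.2 ⟨ne_of_mem_erase ht, htS⟩)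
  have hlt := hf.lt_on_openSegment (hS (S.min'_mem hne)) (hS (S.max'_mem hne))
    (hmin_lt.trans hlt_max).ne (Ioo_subset_openSegment ⟨hmin_lt, hlt_max⟩)
  rw [hc t htS, hc _ (S.min'_mem hne), hc _ (S.max'_mem hne), max_self] at hlt
  exact hlt.false

theorem Fintype.sum_update_eq_sum_add_sub {ι M : Type*} [Fintype ι] [DecidableEq ι]
    [AddCommGroup M] (f : ι → M) (i : ι) (b : M) :
    ∑ k, update f i b k = ∑ k, f k + (b - f i) := by
  rw [sum_update_of_mem (mem_univ i), sdiff_singleton_eq_erase, ← add_sum_erase _ f (mem_univ i)]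
  abel

section SeparableMaxOnStdSimplex

variable {ι : Type*} [Fintype ι] [DecidableEq ι] {F : ℝ → ℝ} {x : ι → ℝ}

theorem transfer_le_of_isMaxOn_sum (hx : x ∈ stdSimplex ℝ ι)
    (hmax : IsMaxOn (fun y : ι → ℝ ↦ ∑ k, F (y k)) (stdSimplex ℝ ι) x) {i j : ι} (hij : i ≠ j)
    {ε : ℝ} (hi : -x i ≤ ε) (hj : ε ≤ x j) :
    F (x i + ε) + F (x j - ε) ≤ F (x i) + F (x j) := by
  set y := update (update x i (x i + ε)) j (x j - ε)
  have hy : y ∈ stdSimplex ℝ ι := by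
    refine ⟨fun k ↦ ?_, ?_⟩
    · rcases eq_or_ne k j with rfl | hkj
      · simp only [y, update_self]; linarith
      rcases eq_or_ne k i with rfl | hki
      · simp only [y, update_of_ne hkj, update_self]; linarith
      · simpa only [y, update_of_ne hkj, update_of_ne hki] using hx.1 k
    · simp only [y, Fintype.sum_update_eq_sum_add_sub, update_of_ne hij.symm, hx.2]
      ring
  have h : ∑ k, F (y k) ≤ ∑ k, F (x k) := hmax hy
  have hFy : (fun k ↦ F (y k)) = update (update (F ∘ x) i (F (x i + ε))) j (F (x j - ε)) := by
    simp only [y, ← comp_update]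
    rfl
  rw [hFy, Fintype.sum_update_eq_sum_add_sub, Fintype.sum_update_eq_sum_add_sub,
    update_of_ne hij.symm] at h
  simp only [comp_apply] at h
  linarith

theorem pos_of_isMaxOn_sum (hx : x ∈ stdSimplex ℝ ι)
    (hmax : IsMaxOn (fun y : ι → ℝ ↦ ∑ k, F (y k)) (stdSimplex ℝ ι) x)
    (hgain : ∀ t > 0, ∃ ε, 0 < ε ∧ ε ≤ t ∧ F t + F 0 < F (t - ε) + F ε) (j : ι) :
    0 < x j := by
  by_contra! hj
  have hj0 : x j = 0 := le_antisymm hj (hx.1 j)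
  obtain ⟨i, hi⟩ : ∃ i, 0 < x i := by
    by_contra! h
    linarith [hx.2, sum_nonpos fun i (_ : i ∈ univ) ↦ h i]
  obtain ⟨ε, hε, hεi, hgt⟩ := hgain (x i) hi
  have hle := transfer_le_of_isMaxOn_sum hx hmax (i := i) (j := j) (ε := -ε)
    (by rintro rfl; linarith) (by linarith) (by rw [hj0]; linarith)
  rw [hj0] at hle
  simp only [← sub_eq_add_neg, zero_sub, neg_neg] at hle
  linarith

theorem hasDerivAt_eq_of_isMaxOn_sum (hx : x ∈ stdSimplex ℝ ι)
    (hmax : IsMaxOn (fun y : ι → ℝ ↦ ∑ k, F (y k)) (stdSimplex ℝ ι) x) {i j : ι}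
    (hi : 0 < x i) (hj : 0 < x j) {a b : ℝ} (ha : HasDerivAt F a (x i))
    (hb : HasDerivAt F b (x j)) : a = b := by
  rcases eq_or_ne i j with rfl | hij
  · exact ha.unique hb
  have hloc : IsLocalMax (fun ε ↦ F (x i + ε) + F (x j - ε)) 0 := by
    filter_upwards [Metric.ball_mem_nhds (0 : ℝ) (lt_min hi hj)] with ε hε
    rw [Metric.mem_ball, Real.dist_eq, sub_zero, abs_lt] at hε
    simpa using transfer_le_of_isMaxOn_sum hx hmax hij
      (by linarith [min_le_left (x i) (x j)]) (by linarith [min_le_right (x i) (x j)])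
  have hderiv : HasDerivAt (fun ε ↦ F (x i + ε) + F (x j - ε)) (a * 1 + b * -1) 0 := by
    refine (HasDerivAt.comp (0 : ℝ) ?_ ((hasDerivAt_id 0).const_add _)).add
      (HasDerivAt.comp (0 : ℝ) ?_ ((hasDerivAt_id 0).const_sub _)) <;> simpa
  linarith [hloc.hasDerivAt_eq_zero hderiv]

end SeparableMaxOnStdSimplex

noncomputable def phiSummand (β t : ℝ) : ℝ := β / 2 * t ^ 2 - t * log t

theorem phiFE_eq_sum_phiSummand (θ : ℕ) (β : ℝ) (x : Fin θ → ℝ) :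
    phiFE θ β x = ∑ i, phiSummand β (x i) - β / 2 := by
  unfold phiFE phiSummand
  rw [sum_sub_distrib, ← mul_sum]
  ring

theorem hasDerivAt_phiSummand (β : ℝ) {t : ℝ} (ht : t ≠ 0) :
    HasDerivAt (phiSummand β) (β * t - (log t + 1)) t :=
  (((hasDerivAt_pow 2 t).const_mul (β / 2)).sub (hasDerivAt_mul_log ht)).congr_deriv (by ring)

theorem exists_phiSummand_transfer_gain (β : ℝ) {t : ℝ} (ht : 0 < t) :
    ∃ ε, 0 < ε ∧ ε ≤ t ∧
      phiSummand β t + phiSummand β 0 < phiSummand β (t - ε) + phiSummand β ε := by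
  set ε := t * exp (-(|β| * t + 1))
  have hε : 0 < ε := by positivity
  have hεt : ε < t :=
    mul_lt_of_lt_one_right ht (exp_lt_one_iff.2 (neg_neg_of_pos (by positivity)))
  have hlog : log ε = log t - (|β| * t + 1) := by
    rw [log_mul ht.ne' (exp_pos _).ne', log_exp]
    ring
  have hlog_le : log (t - ε) ≤ log t := log_le_log (by linarith) (by linarith)
  have hquad : -(|β| * (ε * t)) ≤ β * (ε * (ε - t)) := by
    have h := mul_le_mul_of_nonneg_right (le_abs_self β) (mul_pos hε (sub_pos.2 hεt)).le
    nlinarith [mul_nonneg (abs_nonneg β) (mul_pos hε hε).le]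
  refine ⟨ε, hε, hεt.le, ?_⟩
  simp only [phiSummand, hlog]
  nlinarith [mul_nonneg (sub_pos.2 hεt).le (sub_nonneg.2 hlog_le)]

theorem strictConvexOn_mul_sub_log (β : ℝ) :
    StrictConvexOn ℝ (Set.Ioi 0) (fun t ↦ β * t - log t) :=
  (((LinearMap.mulLeft ℝ β).convexOn (convex_Ioi 0)).add_strictConvexOn
    strictConcaveOn_log_Ioi.neg).congr fun t _ ↦ by simp [sub_eq_add_neg]

theorem phiFE_comp_perm {θ : ℕ} (β : ℝ) (x : Fin θ → ℝ) (σ : Equiv.Perm (Fin θ)) :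
    phiFE θ β (x ∘ σ) = phiFE θ β x := by
  simp only [phiFE, comp_apply, Equiv.sum_comp σ (fun i ↦ x i ^ 2),
    Equiv.sum_comp σ (fun i ↦ x i * log (x i))]

theorem exists_perm_comp_mem_simplexOrd {θ : ℕ} {y : Fin θ → ℝ}
    (hy : y ∈ stdSimplex ℝ (Fin θ)) :
    ∃ σ : Equiv.Perm (Fin θ), y ∘ σ ∈ simplexOrd θ := by
  refine ⟨Tuple.sort (OrderDual.toDual ∘ y), ?_, fun i ↦ hy.1 _, ?_⟩
  · exact monotone_toDual_comp_iff.1 (Tuple.monotone_sort (OrderDual.toDual ∘ y))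
  · exact (Equiv.sum_comp _ y).trans hy.2

theorem isMaxOn_stdSimplex_of_simplexOrd {θ : ℕ} {β : ℝ} {x : Fin θ → ℝ}
    (hmax : ∀ y ∈ simplexOrd θ, phiFE θ β y ≤ phiFE θ β x) :
    IsMaxOn (fun y : Fin θ → ℝ ↦ ∑ k, phiSummand β (y k)) (stdSimplex ℝ (Fin θ)) x := by
  intro y hy
  obtain ⟨σ, hσ⟩ := exists_perm_comp_mem_simplexOrd hy
  have h := hmax _ hσ
  rw [phiFE_comp_perm, phiFE_eq_sum_phiSummand, phiFE_eq_sum_phiSummand] at h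
  exact sub_le_sub_iff_right _ |>.1 h

theorem stmt19_general (θ : ℕ) (β : ℝ)
    (x : Fin θ → ℝ) (hx : x ∈ simplexOrd θ)
    (hmax : ∀ y ∈ simplexOrd θ, phiFE θ β y ≤ phiFE θ β x) :
    (∀ i, 0 < x i) ∧
    (∃ a : ℝ, ∀ i, β * x i = (1 - a) + Real.log (x i)) ∧
    (Finset.univ.image x).card ≤ 2 := by
  have hxΔ : x ∈ stdSimplex ℝ (Fin θ) := hx.2
  have hmaxΔ := isMaxOn_stdSimplex_of_simplexOrd hmax
  have hpos : ∀ i, 0 < x i :=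
    pos_of_isMaxOn_sum hxΔ hmaxΔ fun _ ↦ exists_phiSummand_transfer_gain β
  have hlagrange : ∀ i j, β * x i - log (x i) = β * x j - log (x j) := fun i j ↦ by
    have := hasDerivAt_eq_of_isMaxOn_sum hxΔ hmaxΔ (hpos i) (hpos j)
      (hasDerivAt_phiSummand β (hpos i).ne') (hasDerivAt_phiSummand β (hpos j).ne')
    linarith
  obtain ⟨i₀⟩ : Nonempty (Fin θ) := by
    by_contra! h
    simpa [Fintype.sum_empty] using hxΔ.2
  refine ⟨hpos, ⟨1 - (β * x i₀ - log (x i₀)), fun i ↦ by linarith [hlagrange i i₀]⟩, ?_⟩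
  refine (strictConvexOn_mul_sub_log β).card_le_two_of_forall_eq
    (c := β * x i₀ - log (x i₀)) ?_ ?_
  · simpa [Set.subset_def] using hpos
  · simpa using fun i ↦ hlagrange i i₀

/-- every maximizer `x` of `φ_β` over `Δ_θ` has strictly positive coordinates,
satisfies the Lagrange condition `β·x_i = (1 − a) + log x_i` for some `a ∈ ℝ`, and its
coordinates take at most two distinct values. -/
theorem stmt19 (θ : ℕ) (hθ : 2 ≤ θ) (β : ℝ) (hβ : 0 < β)
    (x : Fin θ → ℝ) (hx : x ∈ simplexOrd θ)
    (hmax : ∀ y ∈ simplexOrd θ, phiFE θ β y ≤ phiFE θ β x) :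
    (∀ i, 0 < x i) ∧
    (∃ a : ℝ, ∀ i, β * x i = (1 - a) + Real.log (x i)) ∧
    (Finset.univ.image x).card ≤ 2 :=
  stmt19_general θ β x hx hmax
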